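/- arXiv:1802.05221 — 3 statements merged into one kernel-verified Lean document; each statement's English description precedes it below -/
import Mathlib

section
/- Let d ≥ 1. Let (L_n)_{n≥0} be a sequence of invertible d×d real matrices with L_0 = I, let (α_n)_{n≥0} and (β_n)_{n≥1} be d×d real matrices, and let (τ_n)_{n≥0} be d×d real matrices with τ_0 invertible. Define A_n = L_n L_{n+1}^{−1} and B_n = L_n(α_n + β_{n+1})L_n^{−1} for n ≥ 0, and C_n = L_n α_n β_n L_{n−1}^{−1} for n ≥ 1. Assume: (B_0 + A_0)·e = e; (C_n + B_n + A_n)·e = e for all n ≥ 1; (β_{n+1} L_n^{−1} + L_{n+1}^{−1})·e = τ_{n+1}·e for all n ≥ 0; and τ_0^{−1}·e = e. Then L_n(α_n τ_n + τ_{n+1})·e = e for all n ≥ 0. -/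
open Matrix

/-- In the UL block factorization `P = [LαT][T⁻¹βL⁻¹]` of a stochastic block
tridiagonal matrix, the row-sum condition on the upper factor `P_U` follows
from the row-sum conditions on `P` and on the lower factor `P_L`. -/
theorem stmt_2 (d : ℕ) (hd : 1 ≤ d)
    (L : ℕ → Matrix (Fin d) (Fin d) ℝ)
    (hL : ∀ n, IsUnit (L n)) (hL0 : L 0 = 1)
    (a : ℕ → Matrix (Fin d) (Fin d) ℝ)
    (b : ℕ → Matrix (Fin d) (Fin d) ℝ)
    (τ : ℕ → Matrix (Fin d) (Fin d) ℝ) (hτ0 : IsUnit (τ 0))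
    (A B C : ℕ → Matrix (Fin d) (Fin d) ℝ)
    (hA : ∀ n, A n = L n * (L (n + 1))⁻¹)
    (hB : ∀ n, B n = L n * (a n + b (n + 1)) * (L n)⁻¹)
    (hC : ∀ n, C (n + 1) = L (n + 1) * (a (n + 1) * b (n + 1)) * (L n)⁻¹)
    (h1 : (B 0 + A 0).mulVec (fun _ => (1 : ℝ)) = fun _ => 1)
    (h2 : ∀ n, 1 ≤ n →
      (C n + B n + A n).mulVec (fun _ => (1 : ℝ)) = fun _ => 1)
    (h3 : ∀ n, (b (n + 1) * (L n)⁻¹ + (L (n + 1))⁻¹).mulVec (fun _ => (1 : ℝ))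
      = (τ (n + 1)).mulVec (fun _ => 1))
    (h4 : (τ 0)⁻¹.mulVec (fun _ => (1 : ℝ)) = fun _ => 1) :
    ∀ n, (L n * (a n * τ n + τ (n + 1))).mulVec (fun _ => (1 : ℝ))
      = fun _ => 1 := by
  intro n
  set e : Fin d → ℝ := fun _ => (1 : ℝ) with he
  match n with
  | 0 =>
    have hτ0e : (τ 0).mulVec e = e := by
      have hmul : τ 0 * (τ 0)⁻¹ = 1 :=
        Matrix.mul_nonsing_inv _ ((Matrix.isUnit_iff_isUnit_det _).mp hτ0)
      calc (τ 0).mulVec e = (τ 0).mulVec ((τ 0)⁻¹.mulVec e) := by rw [h4]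
        _ = (τ 0 * (τ 0)⁻¹).mulVec e := by rw [Matrix.mulVec_mulVec]
        _ = e := by rw [hmul, Matrix.one_mulVec]
    have key := h1
    rw [hA, hB, hL0] at key
    simp only [inv_one, Matrix.mul_one, Matrix.one_mul] at key
    have h30 := h3 0
    rw [hL0] at h30
    simp only [inv_one, Matrix.mul_one] at h30
    rw [hL0, Matrix.one_mul]
    calc (a 0 * τ 0 + τ 1).mulVec e
        = (a 0).mulVec ((τ 0).mulVec e) + (τ 1).mulVec e := by
          rw [Matrix.add_mulVec, Matrix.mulVec_mulVec]
      _ = (a 0).mulVec e + ((b (0 + 1) + (L (0 + 1))⁻¹).mulVec e) := by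
          rw [hτ0e, ← h30]
      _ = (a 0 + b (0 + 1) + (L (0 + 1))⁻¹).mulVec e := by
          simp only [Matrix.add_mulVec]; abel
      _ = e := key
  | (m + 1) =>
    have key := h2 (m + 1) (by omega)
    rw [hA, hB, hC] at key
    have hcomb : L (m + 1) * (a (m + 1) * b (m + 1)) * (L m)⁻¹
        + L (m + 1) * (a (m + 1) + b (m + 2)) * (L (m + 1))⁻¹
        + L (m + 1) * (L (m + 2))⁻¹
        = L (m + 1) * (a (m + 1) * (b (m + 1) * (L m)⁻¹)
            + (a (m + 1) * (L (m + 1))⁻¹ + b (m + 2) * (L (m + 1))⁻¹)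
            + (L (m + 2))⁻¹) := by
      noncomm_ring
    rw [hcomb] at key
    have hinner : (a (m + 1) * τ (m + 1) + τ (m + 2)).mulVec e
        = (a (m + 1) * (b (m + 1) * (L m)⁻¹)
            + (a (m + 1) * (L (m + 1))⁻¹ + b (m + 2) * (L (m + 1))⁻¹)
            + (L (m + 2))⁻¹).mulVec e := by
      have e1 : (τ (m + 1)).mulVec e
          = (b (m + 1) * (L m)⁻¹).mulVec e + (L (m + 1))⁻¹.mulVec e := by
        rw [← h3 m, Matrix.add_mulVec]
      have e2 : (τ (m + 2)).mulVec e
          = (b (m + 2) * (L (m + 1))⁻¹).mulVec e + (L (m + 2))⁻¹.mulVec e := by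
        rw [← h3 (m + 1), Matrix.add_mulVec]
      simp only [Matrix.add_mulVec, ← Matrix.mulVec_mulVec, e1, e2,
        Matrix.mulVec_add]
      abel
    calc (L (m + 1) * (a (m + 1) * τ (m + 1) + τ (m + 2))).mulVec e
        = (L (m + 1)).mulVec ((a (m + 1) * τ (m + 1) + τ (m + 2)).mulVec e) := by
          rw [Matrix.mulVec_mulVec]
      _ = e := by rw [hinner, Matrix.mulVec_mulVec]; exact key
end

section
/- Let (X_n), (Y_n), (R_n), (S_n) and (A_n), (B_n), (C_n) be sequences of d×d real matrices satisfying, with all factors invertible where inverted: A_n = X_n S_{n+1} for n ≥ 0, B_n = X_n R_{n+1} + Y_n S_n for n ≥ 0, C_n = Y_n R_n for n ≥ 1, and assume X_n, R_{n+1}, S_{n+1} are invertible for n ≥ 0. Then Y_1 = C_1 (B_0 − Y_0 S_0)^{−1} X_0 provided B_0 − Y_0 S_0 is invertible, and for all n ≥ 1, Y_{n+1} = C_{n+1} (B_n − Y_n X_{n−1}^{−1} A_{n−1})^{−1} X_n provided B_n − Y_n X_{n−1}^{−1} A_{n−1} is invertible. -/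
open Matrix

private lemma key_aux {d : ℕ} (Yn Rn Xn : Matrix (Fin d) (Fin d) ℝ)
    (hR : IsUnit Rn) (hX : IsUnit Xn) :
    Yn = Yn * Rn * (Xn * Rn)⁻¹ * Xn := by
  rw [Matrix.mul_inv_rev]
  have hRd : IsUnit Rn.det := (Matrix.isUnit_iff_isUnit_det Rn).mp hR
  have hXd : IsUnit Xn.det := (Matrix.isUnit_iff_isUnit_det Xn).mp hX
  rw [mul_assoc (Yn * Rn), mul_assoc Rn⁻¹, Matrix.nonsing_inv_mul Xn hXd, mul_one,
    mul_assoc Yn, Matrix.mul_nonsing_inv Rn hRd, mul_one]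

/-- In the UL block factorization `P = P_U P_L`, the diagonal blocks `Y n` of
the upper factor can be computed recursively from the blocks of `P`. -/
theorem stmt_4 (d : ℕ)
    (X Y R S A B C : ℕ → Matrix (Fin d) (Fin d) ℝ)
    (hA : ∀ n, A n = X n * S (n + 1))
    (hB : ∀ n, B n = X n * R (n + 1) + Y n * S n)
    (hC : ∀ n, 1 ≤ n → C n = Y n * R n)
    (hX : ∀ n, IsUnit (X n))
    (hR : ∀ n, IsUnit (R (n + 1)))
    (hS : ∀ n, IsUnit (S (n + 1))) :
    (IsUnit (B 0 - Y 0 * S 0) →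
      Y 1 = C 1 * (B 0 - Y 0 * S 0)⁻¹ * X 0) ∧
    (∀ n, 1 ≤ n → IsUnit (B n - Y n * (X (n - 1))⁻¹ * A (n - 1)) →
      Y (n + 1) =
        C (n + 1) * (B n - Y n * (X (n - 1))⁻¹ * A (n - 1))⁻¹ * X n) := by
  constructor
  · intro _
    have h0 : B 0 - Y 0 * S 0 = X 0 * R 1 := by rw [hB 0, add_sub_cancel_right]
    rw [h0, hC 1 le_rfl]
    exact key_aux (Y 1) (R 1) (X 0) (hR 0) (hX 0)
  · intro n hn _
    obtain ⟨m, rfl⟩ := Nat.exists_eq_add_of_le hn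
    have hm : 1 + m - 1 = m := by omega
    have hs : (X m)⁻¹ * A m = S (m + 1) := by
      rw [hA m, ← mul_assoc, Matrix.nonsing_inv_mul (X m)
        ((Matrix.isUnit_iff_isUnit_det (X m)).mp (hX m)), one_mul]
    have h0 : B (1 + m) - Y (1 + m) * (X (1 + m - 1))⁻¹ * A (1 + m - 1)
        = X (1 + m) * R (1 + m + 1) := by
      rw [hm, mul_assoc, hs, add_comm 1 m, hB (m + 1), add_sub_cancel_right]
    rw [h0, hC (1 + m + 1) (by omega)]
    exact key_aux _ _ _ (hR (1 + m)) (hX (1 + m))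
end

section
/- Fix an integer d ≥ 1 and real parameters α, β, k with k > 0, k < β + 1 and α + β − k > 0. With the matrices X_n, Y_n, R_n, S_n defined in the context, one has (X_n + Y_n)·e = e and (R_n + S_n)·e = e for all n ≥ 0, where e ∈ ℝ^d is the all-ones vector; in particular, since R_0 = 0, S_0·e = e. (That is, the upper factor P_U with diagonal blocks Y_n and superdiagonal blocks X_n, and the lower factor P_L with diagonal blocks S_n and subdiagonal blocks R_n, have all row sums equal to 1.) -/
noncomputable def a1 (d : ℕ) (α β k : ℝ) (i n : ℕ) : ℝ :=
  (((n : ℝ) + k) * ((n : ℝ) + β + (d : ℝ))) /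
    ((2 * (n : ℝ) + α + β + (d : ℝ) + (i : ℝ)) *
      ((n : ℝ) + k + (d : ℝ) - (i : ℝ) - 1))

noncomputable def a2 (d : ℕ) (α β k : ℝ) (i n : ℕ) : ℝ :=
  (((d : ℝ) - (i : ℝ) - 1) * (β - k + (i : ℝ) + 1)) /
    (((n : ℝ) + α + β - k + 2 * (i : ℝ) + 1) *
      ((n : ℝ) + k + (d : ℝ) - (i : ℝ) - 1))

noncomputable def a3 (d : ℕ) (α β k : ℝ) (i n : ℕ) : ℝ :=
  (((n : ℝ) + α + (i : ℝ)) * ((n : ℝ) + α + β - k + (d : ℝ) + (i : ℝ))) /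
    ((2 * (n : ℝ) + α + β + (d : ℝ) + (i : ℝ)) *
      ((n : ℝ) + α + β - k + 2 * (i : ℝ) + 1))

noncomputable def b1 (d : ℕ) (α β k : ℝ) (i n : ℕ) : ℝ :=
  ((n : ℝ) * ((n : ℝ) + k + (d : ℝ) - 1)) /
    ((2 * (n : ℝ) + α + β + (d : ℝ) + (i : ℝ) - 1) *
      ((n : ℝ) + k + (d : ℝ) - (i : ℝ) - 1))

noncomputable def b2 (d : ℕ) (α β k : ℝ) (i n : ℕ) : ℝ :=
  ((i : ℝ) * (k + (d : ℝ) - (i : ℝ) - 1)) /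
    (((n : ℝ) + α + β - k + 2 * (i : ℝ)) *
      ((n : ℝ) + k + (d : ℝ) - (i : ℝ) - 1))

noncomputable def b3 (d : ℕ) (α β k : ℝ) (i n : ℕ) : ℝ :=
  (((n : ℝ) + α + β + (d : ℝ) + (i : ℝ) - 1) * ((n : ℝ) + α + β - k + (i : ℝ))) /
    ((2 * (n : ℝ) + α + β + (d : ℝ) + (i : ℝ) - 1) *
      ((n : ℝ) + α + β - k + 2 * (i : ℝ)))

/-- `X n = Σ_{i=0}^{d-1} a₁(i,n) E_{ii}`. -/
noncomputable def Xm (d : ℕ) (α β k : ℝ) (n : ℕ) : Matrix (Fin d) (Fin d) ℝ :=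
  Matrix.of fun i j : Fin d =>
    if (i : ℕ) = (j : ℕ) then a1 d α β k i n else 0

/-- `Y n = Σ_{i=0}^{d-1} a₃(i,n) E_{ii} + Σ_{i=0}^{d-2} a₂(i,n) E_{i,i+1}`. -/
noncomputable def Ym (d : ℕ) (α β k : ℝ) (n : ℕ) : Matrix (Fin d) (Fin d) ℝ :=
  Matrix.of fun i j : Fin d =>
    if (i : ℕ) = (j : ℕ) then a3 d α β k i n
    else if (j : ℕ) = (i : ℕ) + 1 then a2 d α β k i n else 0

/-- `R n = Σ_{i=0}^{d-1} b₁(i,n) E_{ii}`. -/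
noncomputable def Rm (d : ℕ) (α β k : ℝ) (n : ℕ) : Matrix (Fin d) (Fin d) ℝ :=
  Matrix.of fun i j : Fin d =>
    if (i : ℕ) = (j : ℕ) then b1 d α β k i n else 0

/-- `S n = Σ_{i=0}^{d-1} b₃(i,n) E_{ii} + Σ_{i=0}^{d-2} b₂(i+1,n) E_{i+1,i}`. -/
noncomputable def Sm (d : ℕ) (α β k : ℝ) (n : ℕ) : Matrix (Fin d) (Fin d) ℝ :=
  Matrix.of fun i j : Fin d =>
    if (i : ℕ) = (j : ℕ) then b3 d α β k i n
    else if (i : ℕ) = (j : ℕ) + 1 then b2 d α β k i n else 0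

/-- `A n = Σ_{i=0}^{d-1} a₁(i,n)b₃(i,n+1) E_{ii}
          + Σ_{i=0}^{d-2} a₁(i+1,n)b₂(i+1,n+1) E_{i+1,i}`. -/
noncomputable def Am (d : ℕ) (α β k : ℝ) (n : ℕ) : Matrix (Fin d) (Fin d) ℝ :=
  Matrix.of fun i j : Fin d =>
    if (i : ℕ) = (j : ℕ) then a1 d α β k i n * b3 d α β k i (n + 1)
    else if (i : ℕ) = (j : ℕ) + 1 then a1 d α β k i n * b2 d α β k i (n + 1)
    else 0

/-- `B n = Σ_{i=0}^{d-2} a₃(i+1,n)b₂(i+1,n) E_{i+1,i}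
          + Σ_{i=0}^{d-2} a₂(i,n)b₃(i+1,n) E_{i,i+1}
          + Σ_{i=0}^{d-1} [a₁(i,n)b₁(i,n+1) + a₂(i,n)b₂(i+1,n)
                            + a₃(i,n)b₃(i,n)] E_{ii}`
(here `a₂(d-1,n)b₂(d,n) = 0` automatically since `a₂(d-1,n) = 0`). -/
noncomputable def Bm (d : ℕ) (α β k : ℝ) (n : ℕ) : Matrix (Fin d) (Fin d) ℝ :=
  Matrix.of fun i j : Fin d =>
    if (i : ℕ) = (j : ℕ) then
      a1 d α β k i n * b1 d α β k i (n + 1) +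
        a2 d α β k i n * b2 d α β k ((i : ℕ) + 1) n +
        a3 d α β k i n * b3 d α β k i n
    else if (i : ℕ) = (j : ℕ) + 1 then a3 d α β k i n * b2 d α β k i n
    else if (j : ℕ) = (i : ℕ) + 1 then a2 d α β k i n * b3 d α β k ((i : ℕ) + 1) n
    else 0

/-- `C n = Σ_{i=0}^{d-1} a₃(i,n)b₁(i,n) E_{ii}
          + Σ_{i=0}^{d-2} a₂(i,n)b₁(i+1,n) E_{i,i+1}`. -/
noncomputable def Cm (d : ℕ) (α β k : ℝ) (n : ℕ) : Matrix (Fin d) (Fin d) ℝ :=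
  Matrix.of fun i j : Fin d =>
    if (i : ℕ) = (j : ℕ) then a3 d α β k i n * b1 d α β k i n
    else if (j : ℕ) = (i : ℕ) + 1 then a2 d α β k i n * b1 d α β k ((i : ℕ) + 1) n
    else 0

/-!
Row `i` of `X_n + Y_n` sums to `a₁(i,n) + a₂(i,n) + a₃(i,n)` even for `i = d - 1`, where the
superdiagonal entry is missing: `a₂(d-1,n) = 0` through its factor `d - i - 1`. Likewise row `i` of
`R_n + S_n` sums to `b₁ + b₂ + b₃`, since `b₂(0,n) = 0`. Both sums equal `1` by a rational-function
identity, all of whose denominators are positive when `0 < k`, `0 < α + β - k` and `i < d`.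
Finally `R_0 = 0` because `b₁` carries the factor `n`.
-/

open Matrix

section RowSums

variable {M : Type*} [AddCommMonoid M] {d : ℕ}

lemma Fin.sum_ite_val_eq (m : ℕ) (c : M) :
    (∑ j : Fin d, if (j : ℕ) = m then c else 0) = if m < d then c else 0 := by
  split_ifs with h
  · simpa [Fin.ext_iff] using Finset.sum_ite_eq' Finset.univ (⟨m, h⟩ : Fin d) (fun _ => c)
  · exact Finset.sum_eq_zero fun j _ => if_neg (by omega)

lemma Fin.sum_ite_eq_val_add_one (m : ℕ) (c : M) :
    (∑ j : Fin d, if m = (j : ℕ) + 1 then c else 0) = if 0 < m ∧ m ≤ d then c else 0 := by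
  rcases m with _ | m
  · simp
  · simpa [eq_comm, Nat.succ_le_iff] using Fin.sum_ite_val_eq (d := d) m c

end RowSums

section JacobiExample

variable {d : ℕ} {α β k : ℝ}

lemma a2_eq_zero_of_add_one_eq {i : ℕ} (h : i + 1 = d) (n : ℕ) : a2 d α β k i n = 0 := by
  have hd : (d : ℝ) = i + 1 := by exact_mod_cast h.symm
  simp [a2, hd]

lemma b2_zero (n : ℕ) : b2 d α β k 0 n = 0 := by
  simp [b2]

lemma Xm_add_Ym_mulVec_one (n : ℕ) :
    (Xm d α β k n + Ym d α β k n) *ᵥ (fun _ => 1) =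
      fun i : Fin d => a1 d α β k i n + a2 d α β k i n + a3 d α β k i n := by
  funext i
  have entry (j : Fin d) : (Xm d α β k n + Ym d α β k n) i j =
      (if (j : ℕ) = i then a1 d α β k i n + a3 d α β k i n else 0) +
        if (j : ℕ) = i + 1 then a2 d α β k i n else 0 := by
    simp only [Matrix.add_apply, Xm, Ym, of_apply]
    split_ifs <;> first | omega | ring
  simp only [mulVec, dotProduct, mul_one, entry, Finset.sum_add_distrib, Fin.sum_ite_val_eq,
    if_pos i.isLt]
  split_ifs with h
  · ring
  · rw [a2_eq_zero_of_add_one_eq (by omega)]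
    ring

lemma Rm_add_Sm_mulVec_one (n : ℕ) :
    (Rm d α β k n + Sm d α β k n) *ᵥ (fun _ => 1) =
      fun i : Fin d => b1 d α β k i n + b2 d α β k i n + b3 d α β k i n := by
  funext i
  have entry (j : Fin d) : (Rm d α β k n + Sm d α β k n) i j =
      (if (j : ℕ) = i then b1 d α β k i n + b3 d α β k i n else 0) +
        if (i : ℕ) = j + 1 then b2 d α β k i n else 0 := by
    simp only [Matrix.add_apply, Rm, Sm, of_apply]
    split_ifs <;> first | omega | ring
  simp only [mulVec, dotProduct, mul_one, entry, Finset.sum_add_distrib, Fin.sum_ite_val_eq,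
    Fin.sum_ite_eq_val_add_one, if_pos i.isLt, i.isLt.le, and_true]
  split_ifs with h
  · ring
  · rw [show (i : ℕ) = 0 by omega, b2_zero]
    ring

lemma Rm_zero : Rm d α β k 0 = 0 := by
  ext i j
  simp [Rm, b1]

lemma a1_add_a2_add_a3 (hk : 0 < k) (hαβk : 0 < α + β - k) {i : ℕ} (hi : i < d) (n : ℕ) :
    a1 d α β k i n + a2 d α β k i n + a3 d α β k i n = 1 := by
  have hn : (0 : ℝ) ≤ n := n.cast_nonneg
  have hi : (i : ℝ) + 1 ≤ d := by exact_mod_cast hi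
  have h₁ : 2 * (n : ℝ) + α + β + d + i ≠ 0 := by linarith [i.cast_nonneg (α := ℝ)]
  have h₂ : (n : ℝ) + k + d - i - 1 ≠ 0 := by linarith
  have h₃ : (n : ℝ) + α + β - k + 2 * i + 1 ≠ 0 := by linarith [i.cast_nonneg (α := ℝ)]
  unfold a1 a2 a3
  rw [div_add_div _ _ (by positivity) (by positivity),
    div_add_div _ _ (by positivity) (by positivity), div_eq_one_iff_eq (by positivity)]
  ring

lemma b1_add_b2_add_b3 (hk : 0 < k) (hαβk : 0 < α + β - k) {i : ℕ} (hi : i < d) (n : ℕ) :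
    b1 d α β k i n + b2 d α β k i n + b3 d α β k i n = 1 := by
  have hn : (0 : ℝ) ≤ n := n.cast_nonneg
  have hi : (i : ℝ) + 1 ≤ d := by exact_mod_cast hi
  have h₁ : 2 * (n : ℝ) + α + β + d + i - 1 ≠ 0 := by linarith [i.cast_nonneg (α := ℝ)]
  have h₂ : (n : ℝ) + k + d - i - 1 ≠ 0 := by linarith
  have h₃ : (n : ℝ) + α + β - k + 2 * i ≠ 0 := by linarith [i.cast_nonneg (α := ℝ)]
  unfold b1 b2 b3
  rw [div_add_div _ _ (by positivity) (by positivity),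
    div_add_div _ _ (by positivity) (by positivity), div_eq_one_iff_eq (by positivity)]
  ring

end JacobiExample

theorem stmt_8_general (d : ℕ) (α β k : ℝ)
    (hk : 0 < k) (hαβk : 0 < α + β - k) :
    (∀ n : ℕ,
      (Xm d α β k n + Ym d α β k n).mulVec (fun _ => (1 : ℝ)) = fun _ => 1) ∧
    (∀ n : ℕ,
      (Rm d α β k n + Sm d α β k n).mulVec (fun _ => (1 : ℝ)) = fun _ => 1) ∧
    Rm d α β k 0 = 0 ∧
    (Sm d α β k 0).mulVec (fun _ => (1 : ℝ)) = fun _ => 1 := by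
  have hXY (n : ℕ) : (Xm d α β k n + Ym d α β k n) *ᵥ (fun _ => 1) = fun _ => 1 := by
    rw [Xm_add_Ym_mulVec_one]
    exact funext fun i => a1_add_a2_add_a3 hk hαβk i.isLt n
  have hRS (n : ℕ) : (Rm d α β k n + Sm d α β k n) *ᵥ (fun _ => 1) = fun _ => 1 := by
    rw [Rm_add_Sm_mulVec_one]
    exact funext fun i => b1_add_b2_add_b3 hk hαβk i.isLt n
  refine ⟨hXY, hRS, Rm_zero, ?_⟩
  simpa only [Rm_zero, zero_add] using hRS 0

/-- The factors `P_U` and `P_L` of the Jacobi-type example have all row sums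
equal to one. -/
theorem stmt_8 (d : ℕ) (hd : 1 ≤ d) (α β k : ℝ)
    (hk : 0 < k) (hkβ : k < β + 1) (hαβk : 0 < α + β - k) :
    (∀ n : ℕ,
      (Xm d α β k n + Ym d α β k n).mulVec (fun _ => (1 : ℝ)) = fun _ => 1) ∧
    (∀ n : ℕ,
      (Rm d α β k n + Sm d α β k n).mulVec (fun _ => (1 : ℝ)) = fun _ => 1) ∧
    Rm d α β k 0 = 0 ∧
    (Sm d α β k 0).mulVec (fun _ => (1 : ℝ)) = fun _ => 1 :=
  stmt_8_general d α β k hk hαβk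
end
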